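/- arXiv:1709.03684 — 3 statements merged into one kernel-verified Lean document; each statement's English description precedes it below -/
import Mathlib

section
/- Let X and Y be finite multisets in a metric space with distinguished submultisets X₁ ⊆ X and Y₁ ⊆ Y. Suppose that for every submultiset X' ⊆ X₁, #{y ∈ Y : dist(y, X') < ε} ≥ #(X'), and for every submultiset Y' ⊆ Y₁, #{x ∈ X : dist(x, Y') < ε} ≥ #(Y'). Then there exist submultisets X₀ ⊆ X and Y₀ ⊆ Y with X₁ ⊆ X₀ and Y₁ ⊆ Y₀ such that X₀ and Y₀ can be paired one-to-one within ε. -/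
/-!
By Hall's theorem the hypothesis on `X₁` yields an injection `f` of `X₁` into `Y` moving each
point by less than `ε`, and the hypothesis on `Y₁` an injection `g` of `Y₁` into `X`. These are
combined as in the proof of the Mendelsohn–Dulmage theorem (or of Cantor–Schröder–Bernstein):
call a point of `Y` reachable if it is obtained from a point of `Y₁` outside the range of `f` by
alternately applying `g` and `f`. Matching each reachable `b ∈ Y₁` with `g b`, and each `a ∈ X₁`
that is not `g b` for a reachable `b` with `f a`, gives a matching covering `X₁` and `Y₁`.
Repeated points of the multisets are told apart through `Multiset.toEnumFinset`.
-/

open Finset Function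

namespace MendelsohnDulmage

variable {ι κ : Type*} {A₁ : Finset ι} {B₁ : Finset κ} (f : A₁ → κ) (g : B₁ → ι)

inductive Reach : κ → Prop
  | base {b : κ} : b ∈ B₁ → b ∉ Set.range f → Reach b
  | step {b : B₁} (h : g b ∈ A₁) : Reach (b : κ) → Reach (f ⟨g b, h⟩)

variable {f g}

theorem Reach.exists_reach_eq_of_apply (hf : Injective f) {a : A₁} (h : Reach f g (f a)) :
    ∃ b : B₁, Reach f g b ∧ g b = a := by
  generalize hb : f a = b at h
  cases h with
  | base _ hnot => exact absurd ⟨a, hb⟩ hnot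
  | step _ hreach => exact ⟨_, hreach, congrArg Subtype.val (hf hb).symm⟩

variable (f g)

open scoped Classical in
noncomputable def matching : Finset (ι × κ) :=
  ({b | Reach f g b} : Finset B₁).image (fun b => (g b, (b : κ))) ∪
    ({a | ∀ b : B₁, Reach f g b → g b ≠ a} : Finset A₁).image (fun a : A₁ => ((a : ι), f a))

variable {f g}

theorem mem_matching {p : ι × κ} :
    p ∈ matching f g ↔ (∃ b : B₁, Reach f g b ∧ (g b, (b : κ)) = p) ∨
      ∃ a : A₁, (∀ b : B₁, Reach f g b → g b ≠ a) ∧ ((a : ι), f a) = p := by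
  simp [matching]

theorem injOn_fst_matching (hg : Injective g) :
    Set.InjOn Prod.fst (matching f g : Set (ι × κ)) := by
  rintro p hp q hq hpq
  rw [mem_coe, mem_matching] at hp hq
  rcases hp with ⟨b, hb, rfl⟩ | ⟨a, ha, rfl⟩ <;> rcases hq with ⟨b', hb', rfl⟩ | ⟨a', ha', rfl⟩
  · rw [hg hpq]
  · exact absurd hpq (ha' b hb)
  · exact absurd hpq.symm (ha b' hb')
  · rw [Subtype.ext hpq]

theorem injOn_snd_matching (hf : Injective f) :
    Set.InjOn Prod.snd (matching f g : Set (ι × κ)) := by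
  have cross : ∀ (b : B₁) (a : A₁), Reach f g b → (∀ b : B₁, Reach f g b → g b ≠ a) →
      (b : κ) ≠ f a := by
    rintro b a hb ha hba
    obtain ⟨b', hb', hb'a⟩ := Reach.exists_reach_eq_of_apply hf (hba ▸ hb)
    exact ha b' hb' hb'a
  rintro p hp q hq hpq
  rw [mem_coe, mem_matching] at hp hq
  rcases hp with ⟨b, hb, rfl⟩ | ⟨a, ha, rfl⟩ <;> rcases hq with ⟨b', hb', rfl⟩ | ⟨a', ha', rfl⟩
  · rw [Subtype.ext hpq]
  · exact absurd hpq (cross b a' hb ha')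
  · exact absurd hpq.symm (cross b' a hb' ha)
  · rw [hf hpq]

theorem subset_image_fst_matching [DecidableEq ι] : A₁ ⊆ (matching f g).image Prod.fst := by
  intro a ha
  rw [mem_image]
  by_cases h : ∃ b : B₁, Reach f g b ∧ g b = a
  · obtain ⟨b, hb, rfl⟩ := h
    exact ⟨_, mem_matching.2 (.inl ⟨b, hb, rfl⟩), rfl⟩
  · push Not at h
    exact ⟨_, mem_matching.2 (.inr ⟨⟨a, ha⟩, h, rfl⟩), rfl⟩

theorem subset_image_snd_matching [DecidableEq κ] : B₁ ⊆ (matching f g).image Prod.snd := by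
  intro b hb
  rw [mem_image]
  by_cases hreach : Reach f g b
  · exact ⟨_, mem_matching.2 (.inl ⟨⟨b, hb⟩, hreach, rfl⟩), rfl⟩
  · obtain ⟨⟨a, ha⟩, rfl⟩ : b ∈ Set.range f :=
      of_not_not fun h => hreach (.base hb h)
    refine ⟨_, mem_matching.2 (.inr ⟨⟨a, ha⟩, ?_, rfl⟩), rfl⟩
    rintro b' hb' rfl
    exact hreach (.step ha hb')

end MendelsohnDulmage

open MendelsohnDulmage

section

variable {ι κ : Type*}

theorem exists_injective_of_forall_card_le {r : ι → κ → Prop} [DecidableRel r]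
    {A₁ : Finset ι} {B : Finset κ} (h : ∀ S ⊆ A₁, #S ≤ #{b ∈ B | ∃ a ∈ S, r a b}) :
    ∃ f : A₁ → κ, Injective f ∧ ∀ a, f a ∈ B ∧ r a (f a) := by
  classical
  obtain ⟨f, hf, hfB⟩ := (all_card_le_biUnion_card_iff_exists_injective
    fun a : A₁ => {b ∈ B | r a b}).1 fun S => by
      convert h (S.map (Embedding.subtype _)) (map_subtype_subset S) using 2
      · simp
      · ext b; simp [and_left_comm]
  exact ⟨f, hf, fun a => by simpa using hfB a⟩

theorem exists_matching_of_forall_card_le [DecidableEq ι] [DecidableEq κ]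
    {r : ι → κ → Prop} [DecidableRel r] {A A₁ : Finset ι} {B B₁ : Finset κ}
    (hA₁ : A₁ ⊆ A) (hB₁ : B₁ ⊆ B)
    (hA : ∀ S ⊆ A₁, #S ≤ #{b ∈ B | ∃ a ∈ S, r a b})
    (hB : ∀ T ⊆ B₁, #T ≤ #{a ∈ A | ∃ b ∈ T, r a b}) :
    ∃ M : Finset (ι × κ), Set.InjOn Prod.fst (M : Set (ι × κ)) ∧
      Set.InjOn Prod.snd (M : Set (ι × κ)) ∧ A₁ ⊆ M.image Prod.fst ∧ M.image Prod.fst ⊆ A ∧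
      B₁ ⊆ M.image Prod.snd ∧ M.image Prod.snd ⊆ B ∧ ∀ p ∈ M, r p.1 p.2 := by
  obtain ⟨f, hf, hfB⟩ := exists_injective_of_forall_card_le hA
  obtain ⟨g, hg, hgA⟩ := exists_injective_of_forall_card_le (r := fun b a => r a b) hB
  have edge : ∀ p ∈ matching f g, p.1 ∈ A ∧ p.2 ∈ B ∧ r p.1 p.2 := by
    intro p hp
    rcases mem_matching.1 hp with ⟨b, -, rfl⟩ | ⟨a, -, rfl⟩
    exacts [⟨(hgA b).1, hB₁ b.2, (hgA b).2⟩, ⟨hA₁ a.2, (hfB a).1, (hfB a).2⟩]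
  refine ⟨matching f g, injOn_fst_matching hg, injOn_snd_matching hf, subset_image_fst_matching,
    ?_, subset_image_snd_matching, ?_, fun p hp => (edge p hp).2.2⟩
  · simpa only [image_subset_iff] using fun p hp => (edge p hp).1
  · simpa only [image_subset_iff] using fun p hp => (edge p hp).2.1

end

theorem Multiset.le_map_fst_of_toEnumFinset_subset {α : Type*} [DecidableEq α] {m : Multiset α}
    {s : Finset (α × ℕ)} (h : m.toEnumFinset ⊆ s) : m ≤ s.val.map Prod.fst :=
  m.map_toEnumFinset_fst ▸ Multiset.map_le_map (val_le_iff.2 h)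

open scoped Classical in
theorem Multiset.forall_card_le_card_filter_toEnumFinset {α : Type*} [DecidableEq α]
    {s : α → α → Prop} [DecidableRel s] {X₁ Y : Multiset α}
    (h : ∀ X' ≤ X₁, Multiset.card X' ≤ Multiset.countP (fun y => ∃ x ∈ X', s x y) Y) :
    ∀ S ⊆ X₁.toEnumFinset, #S ≤ #{q ∈ Y.toEnumFinset | ∃ p ∈ S, s p.1 q.1} := by
  intro S hS
  have := h _ (Multiset.map_fst_le_of_subset_toEnumFinset hS)
  rw [Multiset.card_map, ← Multiset.map_toEnumFinset_fst Y, Multiset.countP_map] at this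
  refine this.trans_eq ?_
  rw [card_def, filter_val]
  exact congrArg Multiset.card (Multiset.filter_congr fun q _ => by simp)

open scoped Classical in
theorem generalized_pairing_lemma {α : Type*} [MetricSpace α] (ε : ℝ)
    (X Y X₁ Y₁ : Multiset α) (hX₁ : X₁ ≤ X) (hY₁ : Y₁ ≤ Y)
    (hX : ∀ X' ≤ X₁, Multiset.card X' ≤
      Multiset.countP (fun y => ∃ x ∈ X', dist y x < ε) Y)
    (hY : ∀ Y' ≤ Y₁, Multiset.card Y' ≤
      Multiset.countP (fun x => ∃ y ∈ Y', dist x y < ε) X) :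
    ∃ X₀ Y₀ : Multiset α, X₁ ≤ X₀ ∧ X₀ ≤ X ∧ Y₁ ≤ Y₀ ∧ Y₀ ≤ Y ∧
      ∃ Z : Multiset (α × α), Z.map Prod.fst = X₀ ∧ Z.map Prod.snd = Y₀ ∧
        ∀ z ∈ Z, dist z.1 z.2 < ε := by
  replace hX : ∀ X' ≤ X₁, Multiset.card X' ≤
      Multiset.countP (fun y => ∃ x ∈ X', dist x y < ε) Y := by
    simpa only [dist_comm] using hX
  obtain ⟨M, hfst, hsnd, hXM, hMX, hYM, hMY, hM⟩ :=
    exists_matching_of_forall_card_le (r := fun p q : α × ℕ => dist p.1 q.1 < ε)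
      (Multiset.toEnumFinset_mono hX₁) (Multiset.toEnumFinset_mono hY₁)
      (Multiset.forall_card_le_card_filter_toEnumFinset hX)
      (Multiset.forall_card_le_card_filter_toEnumFinset hY)
  refine ⟨(M.image Prod.fst).val.map Prod.fst, (M.image Prod.snd).val.map Prod.fst,
    Multiset.le_map_fst_of_toEnumFinset_subset hXM, Multiset.map_fst_le_of_subset_toEnumFinset hMX,
    Multiset.le_map_fst_of_toEnumFinset_subset hYM, Multiset.map_fst_le_of_subset_toEnumFinset hMY,
    M.val.map fun p => (p.1.1, p.2.1), ?_, ?_, ?_⟩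
  · rw [Multiset.map_map, image_val_of_injOn hfst, Multiset.map_map]; rfl
  · rw [Multiset.map_map, image_val_of_injOn hsnd, Multiset.map_map]; rfl
  · intro z hz
    obtain ⟨p, hp, rfl⟩ := Multiset.mem_map.1 hz
    exact hM p hp
end

section
/- Let S be a finite multiset of points in (0,1), let K ≥ 1 and L ≥ 1 be integers. Then there exist points 0 = v₀ ≤ w₀ < v₁ ≤ w₁ < ⋯ < v_K ≤ w_K = 1 defining disjoint closed intervals V_r = [v_r, w_r] (some possibly degenerate) such that: (i) dist(V_r, V_s) ≥ 1/(K(L+1)) for r ≠ s; (ii) the diameter of each V_r is at most 2/K − 2/(K(L+1)); and (iii) the total number of points of S (with multiplicity) lying in ⋃_r V_r is at least (L/(L+1))·#(S). -/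
/-!
Let `N = K(L+1)` and split `[0, 1)` into the pieces `[i/N, (i+1)/N)`, grouped into `K` blocks of
`L+1` consecutive pieces. In each block delete the piece containing the fewest points of `S`: it
holds at most a `1/(L+1)` share of the block's points. The intervals `V_r` are the closures of the
gaps between consecutive deleted pieces. Two consecutive intervals are separated by a deleted piece
of length `1/N`, a gap spans at most `2L` pieces, and only the points in deleted pieces are lost.
-/

open Finset

theorem Multiset.countP_le_sum_countP {ι α : Type*} {q : α → Prop} [DecidablePred q]
    {s : Finset ι} {p : ι → α → Prop} [∀ i, DecidablePred (p i)] {T : Multiset α}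
    (h : ∀ a ∈ T, q a → ∃ i ∈ s, p i a) :
    T.countP q ≤ ∑ i ∈ s, T.countP (p i) := by
  induction T using Multiset.induction_on with
  | empty => simp
  | cons a T ih =>
    simp only [Multiset.countP_cons, sum_add_distrib]
    gcongr
    · exact ih fun b hb => h b (Multiset.mem_cons_of_mem hb)
    · split_ifs with hq
      · obtain ⟨i, hi, hpi⟩ := h a (Multiset.mem_cons_self a T) hq
        calc 1 = (if p i a then 1 else 0) := (if_pos hpi).symm
          _ ≤ ∑ j ∈ s, if p j a then 1 else 0 :=
            single_le_sum_of_canonicallyOrdered (f := fun j => if p j a then 1 else 0) hi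
      · exact Nat.zero_le _

theorem Multiset.mul_card_le_succ_mul_countP {α : Type*} {p : α → Prop} [DecidablePred p]
    {S : Multiset α} {L : ℕ} (h : (L + 1) * S.countP (fun x => ¬p x) ≤ card S) :
    L * card S ≤ (L + 1) * S.countP p := by
  rw [Multiset.card_eq_countP_add_countP p] at h ⊢
  linarith

theorem Finset.sum_range_mul_eq_sum_sum {β : Type*} [AddCommMonoid β] (f : ℕ → β) (K M : ℕ) :
    ∑ i ∈ range (K * M), f i = ∑ r ∈ range K, ∑ j ∈ range M, f (r * M + j) := by
  induction K with
  | zero => simp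
  | succ K ih => rw [sum_range_succ, ← ih, Nat.succ_mul, sum_range_add]

theorem exists_block_selection_sum_le (f : ℕ → ℕ) (K : ℕ) {M : ℕ} (hM : 0 < M) :
    ∃ g : ℕ → ℕ, (∀ r, g r < M) ∧
      M * ∑ r ∈ range K, f (r * M + g r) ≤ ∑ i ∈ range (K * M), f i := by
  have block_min : ∀ r, ∃ j ∈ range M, M * f (r * M + j) ≤ ∑ k ∈ range M, f (r * M + k) :=
    fun r => exists_le_of_sum_le (nonempty_range_iff.2 hM.ne') (by simp [mul_sum])
  choose g hgM hg using block_min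
  refine ⟨g, fun r => mem_range.1 (hgM r), ?_⟩
  rw [mul_sum, sum_range_mul_eq_sum_sum]
  exact sum_le_sum fun r _ => hg r

theorem exists_block_selection_countP_le {α : Type*} (idx : α → ℕ) (K : ℕ) {M : ℕ}
    (hM : 0 < M) {S : Multiset α} (hS : ∀ x ∈ S, idx x < K * M) :
    ∃ g : ℕ → ℕ, (∀ r, g r < M) ∧
      M * ∑ r ∈ range K, S.countP (fun x => r * M + g r = idx x) ≤ Multiset.card S := by
  obtain ⟨g, hg, hsel⟩ := exists_block_selection_sum_le (fun i => (S.map idx).count i) K hM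
  refine ⟨g, hg, ?_⟩
  have hT : ∀ i ∈ S.map idx, i ∈ range (K * M) := by
    simpa only [Multiset.mem_map, mem_range, forall_exists_index, and_imp,
      forall_apply_eq_imp_iff₂] using hS
  rw [← Multiset.card_map idx S, ← Multiset.sum_count_eq_card hT]
  simpa only [Multiset.count_map, ← Multiset.countP_eq_card_filter] using hsel

theorem exists_le_and_lt_succ_of_le_of_lt {α : Type*} [LinearOrder α] {c : ℕ → α} {x : α}
    {n : ℕ} (h0 : c 0 ≤ x) (hn : x < c n) : ∃ r < n, c r ≤ x ∧ x < c (r + 1) := by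
  induction n with
  | zero => exact absurd h0 (not_le.2 hn)
  | succ n ih =>
    by_cases hx : x < c n
    · obtain ⟨r, hr, h⟩ := ih hx
      exact ⟨r, hr.trans n.lt_succ_self, h⟩
    · exact ⟨n, n.lt_succ_self, not_lt.1 hx, hn⟩

/-- For `1 ≤ r ≤ K`, `blockCut K M g r` is the index of the piece deleted from block `r - 1`;
`-1` and `K * M` are sentinels, so that the `r`-th gap consists of the pieces strictly between
`blockCut K M g r` and `blockCut K M g (r + 1)`. -/
def blockCut (K M : ℕ) (g : ℕ → ℕ) : ℕ → ℤ
  | 0 => -1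
  | r + 1 => if r < K then r * M + g r else K * M

section blockCut

variable {K M : ℕ} {g : ℕ → ℕ}

@[simp]
theorem blockCut_zero : blockCut K M g 0 = -1 := rfl

@[simp]
theorem blockCut_succ_self : blockCut K M g (K + 1) = K * M := by
  simp [blockCut]

theorem blockCut_succ_bounds (hg : ∀ r, g r < M) {r : ℕ} (hr : r ≤ K) :
    blockCut K M g r < blockCut K M g (r + 1) ∧
      blockCut K M g (r + 1) ≤ blockCut K M g r + 2 * M - 1 := by
  cases r with
  | zero =>
    have := hg 0
    simp only [blockCut]
    split_ifs with hK
    · omega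
    · obtain rfl : K = 0 := by omega
      omega
  | succ r =>
    have := hg r
    have := hg (r + 1)
    simp only [blockCut, if_pos (show r < K by omega)]
    split_ifs with h
    · push_cast; constructor <;> linarith
    · obtain rfl : K = r + 1 := by omega
      push_cast; constructor <;> linarith

theorem blockCut_monotone (hg : ∀ r, g r < M) : Monotone (blockCut K M g) := by
  refine monotone_nat_of_le_succ fun r => ?_
  rcases le_or_gt r K with hr | hr
  · exact (blockCut_succ_bounds hg hr).1.le
  · obtain ⟨s, rfl⟩ : ∃ s, r = s + 1 := ⟨r - 1, by omega⟩
    simp [blockCut, not_lt.2 hr.le, not_lt.2 (show K ≤ s by omega)]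

theorem blockCut_ne {i : ℕ} (hi : ∀ s < K, s * M + g s ≠ i) {r : ℕ} (hr : r ≤ K) :
    blockCut K M g r ≠ i := by
  cases r with
  | zero => simp only [blockCut_zero]; omega
  | succ s =>
    simp only [blockCut, if_pos (show s < K by omega)]
    exact_mod_cast hi s (by omega)

theorem exists_blockCut_lt_and_lt_blockCut_succ {i : ℕ} (hi : i < K * M)
    (hne : ∀ s < K, s * M + g s ≠ i) :
    ∃ r < K + 1, blockCut K M g r < i ∧ (i : ℤ) < blockCut K M g (r + 1) := by
  obtain ⟨r, hr, hle, hlt⟩ := exists_le_and_lt_succ_of_le_of_lt (c := blockCut K M g)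
    (x := (i : ℤ)) (n := K + 1) (by simp) (by simp only [blockCut_succ_self]; exact_mod_cast hi)
  exact ⟨r, hr, lt_of_le_of_ne hle (blockCut_ne hne (by omega)), hlt⟩

theorem exists_mem_Icc_blockCut_div (hKM : 0 < K * M) {x : ℝ} (hx₀ : 0 ≤ x) (hx₁ : x < 1)
    (hne : ∀ s < K, s * M + g s ≠ ⌊x * (K * M : ℕ)⌋₊) :
    ∃ r < K + 1,
      x ∈ Set.Icc (((blockCut K M g r : ℝ) + 1) / (K * M : ℕ))
        ((blockCut K M g (r + 1) : ℝ) / (K * M : ℕ)) := by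
  set N : ℝ := ((K * M : ℕ) : ℝ)
  have hN : 0 < N := Nat.cast_pos.2 hKM
  set i := ⌊x * N⌋₊
  have hi : i < K * M := (Nat.floor_lt (by positivity)).2 (mul_lt_of_lt_one_left hN hx₁)
  obtain ⟨r, hr, hlo, hhi⟩ := exists_blockCut_lt_and_lt_blockCut_succ hi hne
  refine ⟨r, hr, ?_, ?_⟩
  · rw [div_le_iff₀ hN]
    calc (blockCut K M g r + 1 : ℝ) ≤ i := by exact_mod_cast hlo
      _ ≤ x * N := Nat.floor_le (by positivity)
  · rw [le_div_iff₀ hN]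
    calc x * N ≤ i + 1 := (Nat.lt_floor_add_one _).le
      _ ≤ blockCut K M g (r + 1) := by exact_mod_cast hhi

end blockCut

open scoped Classical in
theorem interval_selection_general (K L : ℕ) (hK : 1 ≤ K)
    (S : Multiset ℝ) (hS : ∀ x ∈ S, x ∈ Set.Ioo (0 : ℝ) 1) :
    ∃ v w : Fin (K + 1) → ℝ,
      v 0 = 0 ∧ w (Fin.last K) = 1 ∧
      (∀ r, v r ≤ w r) ∧
      -- (i) the intervals are separated by at least 1/(K(L+1))
      (∀ r s : Fin (K + 1), r < s → w r + 1 / (K * (L + 1)) ≤ v s) ∧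
      -- (ii) each interval has diameter at most 2/K - 2/(K(L+1))
      (∀ r, w r - v r ≤ 2 / K - 2 / (K * (L + 1))) ∧
      -- (iii) at least L/(L+1) of the points of S lie in the union of the intervals
      L * Multiset.card S ≤
        (L + 1) * Multiset.countP (fun x => ∃ r, v r ≤ x ∧ x ≤ w r) S := by
  have hKM : 0 < K * (L + 1) := Nat.mul_pos hK L.succ_pos
  set N : ℝ := ((K * (L + 1) : ℕ) : ℝ)
  have hN : 0 < N := Nat.cast_pos.2 hKM
  have hN_eq : N = K * (L + 1) := by push_cast [N]; ring
  obtain ⟨g, hg, hsel⟩ :=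
    exists_block_selection_countP_le (fun x => ⌊x * N⌋₊) K (M := L + 1) (by omega) fun x hx =>
      (Nat.floor_lt (mul_nonneg (hS x hx).1.le hN.le)).2 (mul_lt_of_lt_one_left hN (hS x hx).2)
  set c := blockCut K (L + 1) g
  refine ⟨fun r => (c r + 1) / N, fun r => c (r + 1) / N, by simp [c], ?_, fun r => ?_,
    fun r s hrs => ?_, fun r => ?_, ?_⟩
  · simp only [Fin.val_last, c, blockCut_succ_self]
    exact_mod_cast div_self hN.ne'
  · exact div_le_div_of_nonneg_right (by exact_mod_cast (blockCut_succ_bounds hg r.is_le).1) hN.le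
  · have : c (r + 1) ≤ c s := blockCut_monotone hg (show (r : ℕ) + 1 ≤ s from hrs)
    dsimp only
    rw [← hN_eq, ← add_div]
    gcongr
  · have : (c (r + 1) : ℝ) ≤ c r + 2 * (L + 1) - 1 := by
      exact_mod_cast (blockCut_succ_bounds hg r.is_le).2
    rw [show 2 / (K : ℝ) - 2 / (K * (L + 1)) = 2 * L / N by rw [hN_eq]; field_simp; ring,
      div_sub_div_same]
    gcongr
    linarith
  · refine Multiset.mul_card_le_succ_mul_countP (le_trans ?_ hsel)
    gcongr
    refine Multiset.countP_le_sum_countP fun x hx hPx => ?_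
    by_contra! hne
    obtain ⟨r, hr, hx_mem⟩ := exists_mem_Icc_blockCut_div hKM (hS x hx).1.le (hS x hx).2
      fun s hs => hne s (mem_range.2 hs)
    exact hPx ⟨⟨r, hr⟩, hx_mem⟩

open scoped Classical in
theorem interval_selection (K L : ℕ) (hK : 1 ≤ K) (hL : 1 ≤ L)
    (S : Multiset ℝ) (hS : ∀ x ∈ S, x ∈ Set.Ioo (0 : ℝ) 1) :
    ∃ v w : Fin (K + 1) → ℝ,
      v 0 = 0 ∧ w (Fin.last K) = 1 ∧
      (∀ r, v r ≤ w r) ∧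
      -- (i) the intervals are separated by at least 1/(K(L+1))
      (∀ r s : Fin (K + 1), r < s → w r + 1 / (K * (L + 1)) ≤ v s) ∧
      -- (ii) each interval has diameter at most 2/K - 2/(K(L+1))
      (∀ r, w r - v r ≤ 2 / K - 2 / (K * (L + 1))) ∧
      -- (iii) at least L/(L+1) of the points of S lie in the union of the intervals
      L * Multiset.card S ≤
        (L + 1) * Multiset.countP (fun x => ∃ r, v r ≤ x ∧ x ≤ w r) S :=
  interval_selection_general K L hK S hS
end

section
/- In the special case X = [0,1] (dimension 1) with k' = k + 1: given an open cover 𝒲 of [0,1] and for each W ∈ 𝒲 a continuous projection-valued map p_W : W → M_n(ℂ) with rank p_W(x) ≥ k + 1, there is a continuous projection-valued map p : [0,1] → M_n(ℂ) with rank p(x) ≥ k and p(x) ≤ ⋁{p_W(x) : x ∈ W ∈ 𝒲} for all x. -/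
/-!
Let `J x = ⨆ {i | x ∈ W i}, range (pW i x)`. It suffices to find a continuous field `F` of
injective `n × k` matrices whose columns lie in `J x`: the orthogonal projection
`F (Fᴴ F)⁻¹ Fᴴ` onto the column space of `F x` is then the required `p x`.

Every vector of `J a` is the value at `a` of a continuous local section of `J`, so such frame
fields exist near every point; they are continued along `[0, 1]` by real induction. Where two
local frames `A` and `B` meet at `a`, the pencil `(1 - w) • A a + w • B a` is singular for only
finitely many `w ∈ ℂ`, so some path `γ` from `0` to `1` in `ℂ` avoids them. By compactness,
`(1 - γ t) • A x + γ t • B x` then stays injective for all `t` and all `x` near `a`, and letting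
`t` run from `0` to `1` over a short interval turns `A` into `B`. This is the one place where
complex scalars are needed.
-/

open Function Matrix Set Filter Topology Module

namespace Matrix

variable {m d : Type*} [Fintype d]

lemma exists_injective_mulVec_col_mem {K : Type*} [Field K] {V : Submodule K (m → K)}
    (h : Fintype.card d ≤ finrank K V) :
    ∃ F : Matrix m d K, Injective F.mulVec ∧ ∀ j, F.col j ∈ V := by
  obtain ⟨f, hf⟩ := exists_linearIndependent_of_le_finrank h
  refine ⟨Matrix.of fun i j => (f (Fintype.equivFin d j) : m → K) i, ?_, fun j => (f _).2⟩
  rw [mulVec_injective_iff]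
  exact (hf.map' V.subtype V.ker_subtype).comp _ (Fintype.equivFin d).injective

variable [Fintype m]

section colProj

open scoped ComplexOrder

variable [DecidableEq d] {𝕜 : Type*} [RCLike 𝕜]

noncomputable def colProj (F : Matrix m d 𝕜) : Matrix m m 𝕜 := F * (Fᴴ * F)⁻¹ * Fᴴ

lemma isUnit_det_conjTranspose_mul_self {F : Matrix m d 𝕜} (hF : Injective F.mulVec) :
    IsUnit (Fᴴ * F).det :=
  (isUnit_iff_isUnit_det _).1 (PosDef.conjTranspose_mul_self F hF).isUnit

lemma colProj_mul_self {F : Matrix m d 𝕜} (hF : Injective F.mulVec) : colProj F * F = F := by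
  rw [colProj, Matrix.mul_assoc, Matrix.mul_assoc,
    nonsing_inv_mul _ (isUnit_det_conjTranspose_mul_self hF), Matrix.mul_one]

lemma isIdempotentElem_colProj {F : Matrix m d 𝕜} (hF : Injective F.mulVec) :
    IsIdempotentElem (colProj F) := by
  rw [IsIdempotentElem]
  nth_rw 2 [colProj]
  rw [← Matrix.mul_assoc, ← Matrix.mul_assoc, colProj_mul_self hF, colProj]

lemma isSelfAdjoint_colProj (F : Matrix m d 𝕜) : IsSelfAdjoint (colProj F) := by
  rw [IsSelfAdjoint, star_eq_conjTranspose, colProj, conjTranspose_mul, conjTranspose_mul,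
    conjTranspose_conjTranspose, conjTranspose_nonsing_inv, conjTranspose_mul,
    conjTranspose_conjTranspose, Matrix.mul_assoc]

lemma range_mulVecLin_colProj {F : Matrix m d 𝕜} (hF : Injective F.mulVec) :
    LinearMap.range (colProj F).mulVecLin = LinearMap.range F.mulVecLin := by
  apply le_antisymm
  · rw [colProj, Matrix.mul_assoc, mulVecLin_mul]
    exact LinearMap.range_comp_le_range _ _
  · conv_lhs => rw [← colProj_mul_self hF, mulVecLin_mul]
    exact LinearMap.range_comp_le_range _ _

lemma rank_colProj {F : Matrix m d 𝕜} (hF : Injective F.mulVec) :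
    (colProj F).rank = Fintype.card d := by
  rw [rank, range_mulVecLin_colProj hF, LinearMap.finrank_range_of_inj hF,
    finrank_fintype_fun_eq_card]

lemma _root_.Continuous.colProj {X : Type*} [TopologicalSpace X] {F : X → Matrix m d 𝕜}
    (hF : Continuous F) (hinj : ∀ x, Injective (F x).mulVec) :
    Continuous fun x => colProj (F x) := by
  have hG : Continuous fun x => (F x)ᴴ * F x := hF.matrix_conjTranspose.matrix_mul hF
  have hinv : Continuous fun x => ((F x)ᴴ * F x)⁻¹ := by
    refine continuous_iff_continuousAt.2 fun x =>
      (continuousAt_matrix_inv _ ?_).comp hG.continuousAt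
    rw [Ring.inverse_eq_inv']
    exact continuousAt_inv₀ (isUnit_det_conjTranspose_mul_self (hinj x)).ne_zero
  exact (hF.matrix_mul hinv).matrix_mul hF.matrix_conjTranspose

end colProj

section pencil

variable [DecidableEq d] {K : Type*} [Field K]

lemma finite_setOf_det_add_smul_eq_zero {M N : Matrix d d K} (hM : M.det ≠ 0) :
    {w : K | (M + w • N).det = 0}.Finite := by
  set p : Polynomial K :=
    (M.map Polynomial.C + (Polynomial.X : Polynomial K) • N.map Polynomial.C).det
  have hp : ∀ w, p.eval w = (M + w • N).det := fun w => by
    rw [← Polynomial.coe_evalRingHom, RingHom.map_det]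
    congr 1
    ext i j
    simp [mul_comm w]
  have hp0 : p ≠ 0 := fun h => hM (by simpa [hp] using congrArg (Polynomial.eval 0) h)
  exact (Polynomial.finite_setOfPred_isRoot hp0).subset fun w hw => by
    simpa [Polynomial.IsRoot, hp] using hw

lemma mulVec_injective_of_det_mul_ne_zero {L : Matrix d m K} {F : Matrix m d K}
    (h : (L * F).det ≠ 0) : Injective F.mulVec := by
  refine Injective.of_comp (f := L.mulVec) ?_
  rw [show L.mulVec ∘ F.mulVec = (L * F).mulVec from funext fun v => mulVec_mulVec v L F]
  exact mulVec_injective_of_isUnit ((isUnit_iff_isUnit_det _).2 (isUnit_iff_ne_zero.2 h))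

lemma finite_setOf_not_injective_mulVec_add_smul {A D : Matrix m d ℂ}
    (hA : Injective A.mulVec) : {w : ℂ | ¬ Injective (A + w • D).mulVec}.Finite := by
  refine (finite_setOf_det_add_smul_eq_zero (N := Aᴴ * D)
    (isUnit_det_conjTranspose_mul_self hA).ne_zero).subset fun w hw => ?_
  by_contra h
  exact hw (mulVec_injective_of_det_mul_ne_zero (L := Aᴴ)
    (by rwa [Matrix.mul_add, Matrix.mul_smul]))

end pencil

lemma eventually_injective_mulVec {𝕜 : Type*} [NontriviallyNormedField 𝕜] [CompleteSpace 𝕜]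
    {F₀ : Matrix m d 𝕜} (h : Injective F₀.mulVec) : ∀ᶠ F in 𝓝 F₀, Injective F.mulVec := by
  simp_rw [mulVec_injective_iff] at h ⊢
  exact (continuous_id.matrix_transpose.tendsto F₀).eventually h.eventually

end Matrix

section LocalSections

variable {Y : Type*} [TopologicalSpace Y]
  {R E : Type*} [Semiring R] [AddCommMonoid E] [Module R E] [TopologicalSpace E]

def HasLocalSections (J : Y → Submodule R E) : Prop :=
  ∀ a, ∀ v ∈ J a, ∃ s : Y → E, s a = v ∧ ∀ᶠ x in 𝓝 a, ContinuousAt s x ∧ s x ∈ J x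

lemma HasLocalSections.iSup [ContinuousAdd E] {ι : Sort*} {J : ι → Y → Submodule R E}
    (hJ : ∀ i, HasLocalSections (J i)) : HasLocalSections fun x => ⨆ i, J i x := by
  intro a v hv
  refine Submodule.iSup_induction (motive := fun v => ∃ s : Y → E, s a = v ∧
    ∀ᶠ x in 𝓝 a, ContinuousAt s x ∧ s x ∈ ⨆ i, J i x) _ hv (fun i v hv => ?_) ?_
    fun v w hv hw => ?_
  · obtain ⟨s, hsa, hs⟩ := hJ i a v hv
    exact ⟨s, hsa, hs.mono fun x hx => ⟨hx.1, Submodule.mem_iSup_of_mem i hx.2⟩⟩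
  · exact ⟨0, rfl, Eventually.of_forall fun x => ⟨continuousAt_const, zero_mem _⟩⟩
  · obtain ⟨s, rfl, hs⟩ := hv
    obtain ⟨t, rfl, ht⟩ := hw
    exact ⟨s + t, rfl, (hs.and ht).mono fun x hx => ⟨hx.1.1.add hx.2.1, add_mem hx.1.2 hx.2.2⟩⟩

lemma hasLocalSections_range_mulVecLin {m d : Type*} [Fintype d] {R : Type*} [CommSemiring R]
    [TopologicalSpace R] [IsTopologicalSemiring R] {W : Set Y} (hW : IsOpen W)
    {M : Y → Matrix m d R} (hM : ContinuousOn M W) :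
    HasLocalSections fun x => ⨆ _ : x ∈ W, LinearMap.range (M x).mulVecLin := by
  intro a v hv
  dsimp only at hv ⊢
  by_cases ha : a ∈ W
  · rw [iSup_pos ha] at hv
    obtain ⟨u, rfl⟩ := hv
    refine ⟨fun x => M x *ᵥ u, rfl, ?_⟩
    filter_upwards [hW.mem_nhds ha] with x hx
    refine ⟨(continuous_id.matrix_mulVec continuous_const).continuousAt.comp
      (hM.continuousAt (hW.mem_nhds hx)), ?_⟩
    rw [iSup_pos hx]
    exact ⟨u, rfl⟩
  · rw [iSup_neg ha, Submodule.mem_bot] at hv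
    exact ⟨0, hv.symm, Eventually.of_forall fun x => ⟨continuousAt_const, zero_mem _⟩⟩

end LocalSections

section FrameFields

variable {Y : Type*} [TopologicalSpace Y] {m d : Type*} [Fintype d]

def IsFrameFieldOn (J : Y → Submodule ℂ (m → ℂ)) (F : Y → Matrix m d ℂ) (s : Set Y) : Prop :=
  ContinuousOn F s ∧ ∀ x ∈ s, Injective (F x).mulVec ∧ ∀ j, (F x).col j ∈ J x

variable {J : Y → Submodule ℂ (m → ℂ)}

lemma IsFrameFieldOn.mono {F : Y → Matrix m d ℂ} {s t : Set Y} (hF : IsFrameFieldOn J F s)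
    (hts : t ⊆ s) : IsFrameFieldOn J F t :=
  ⟨hF.1.mono hts, fun x hx => hF.2 x (hts hx)⟩

section Local

variable [Fintype m]

lemma HasLocalSections.exists_frameFieldOn (hJ : HasLocalSections J) {a : Y}
    {F₀ : Matrix m d ℂ} (hinj : Injective F₀.mulVec) (hF₀ : ∀ j, F₀.col j ∈ J a) :
    ∃ A U, IsOpen U ∧ a ∈ U ∧ IsFrameFieldOn J A U ∧ A a = F₀ := by
  choose s hsa hs using fun j => hJ a _ (hF₀ j)
  set A : Y → Matrix m d ℂ := fun x => Matrix.of fun i j => s j x i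
  have hAa : A a = F₀ := by
    ext i j
    simp [A, hsa]
  have hsec : ∀ᶠ x in 𝓝 a, ContinuousAt A x ∧ ∀ j, (A x).col j ∈ J x := by
    filter_upwards [eventually_all.2 hs] with x hx
    exact ⟨continuousAt_pi.2 fun i => continuousAt_pi.2 fun j =>
      (continuous_apply i).continuousAt.comp (hx j).1, fun j => (hx j).2⟩
  have hinj : ∀ᶠ x in 𝓝 a, Injective (A x).mulVec :=
    hsec.self_of_nhds.1.eventually (eventually_injective_mulVec (by rwa [hAa]))
  obtain ⟨U, hU, hUo, haU⟩ := eventually_nhds_iff.1 (hsec.and hinj)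
  exact ⟨A, U, hUo, haU, ⟨fun x hx => (hU x hx).1.1.continuousWithinAt,
    fun x hx => ⟨(hU x hx).2, (hU x hx).1.2⟩⟩, hAa⟩

lemma exists_path_eventually_injective_mulVec [DecidableEq d] {a : Y} {A B : Y → Matrix m d ℂ}
    (hA : ContinuousAt A a) (hB : ContinuousAt B a) (hAa : Injective (A a).mulVec)
    (hBa : Injective (B a).mulVec) :
    ∃ γ : Path (0 : ℂ) 1, ∀ᶠ x in 𝓝 a, ∀ t, Injective ((1 - γ t) • A x + γ t • B x).mulVec := by
  set S := {w : ℂ | ¬ Injective ((1 - w) • A a + w • B a).mulVec}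
  have hS : S.Countable := by
    have hpencil : ∀ w : ℂ, (1 - w) • A a + w • B a = A a + w • (B a - A a) := fun w => by
      module
    simp only [S, hpencil]
    exact (finite_setOf_not_injective_mulVec_add_smul hAa).countable
  have h0 : (0 : ℂ) ∈ Sᶜ := by simpa [S] using hAa
  have h1 : (1 : ℂ) ∈ Sᶜ := by simpa [S] using hBa
  obtain ⟨γ, hγ⟩ := (hS.isPathConnected_compl_of_one_lt_rank
    (by simp [Complex.rank_real_complex])).joinedIn 0 h0 1 h1
  refine ⟨γ, (isCompact_univ.eventually_forall_of_forall_eventually fun t _ => ?_).mono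
    fun x hx t => hx t trivial⟩
  have hcont : ContinuousAt (fun z : Y × unitInterval => (1 - γ z.2) • A z.1 + γ z.2 • B z.1)
      (a, t) := by
    have hA' : ContinuousAt (fun z : Y × unitInterval => A z.1) (a, t) :=
      hA.comp continuousAt_fst
    have hB' : ContinuousAt (fun z : Y × unitInterval => B z.1) (a, t) :=
      hB.comp continuousAt_fst
    fun_prop
  exact hcont.eventually (eventually_injective_mulVec (not_not.1 (hγ t)))

end Local

section Interval

variable [LinearOrder Y] [OrderTopology Y]

lemma IsFrameFieldOn.glue {a b c : Y} {F G : Y → Matrix m d ℂ}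
    (hF : IsFrameFieldOn J F (Icc a b)) (hG : IsFrameFieldOn J G (Icc b c)) (hFG : F b = G b)
    (hbc : b ≤ c) : ∃ H, IsFrameFieldOn J H (Icc a c) ∧ H c = G c := by
  set H := fun x => if x ≤ b then F x else G x
  have hHF : EqOn H F (Icc a b) := fun x hx => if_pos hx.2
  have hHG : EqOn H G (Icc b c) := fun x hx => by
    rcases hx.1.eq_or_lt with rfl | hbx
    · simp [H, hFG]
    · exact if_neg hbx.not_ge
  refine ⟨H, ⟨?_, fun x hx => ?_⟩, hHG ⟨hbc, le_rfl⟩⟩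
  · exact ((hF.1.congr hHF).union_of_isClosed (hG.1.congr hHG) isClosed_Icc isClosed_Icc).mono
      Icc_subset_Icc_union_Icc
  · rcases le_or_gt x b with hxb | hbx
    · rw [hHF ⟨hx.1, hxb⟩]
      exact hF.2 x ⟨hx.1, hxb⟩
    · rw [hHG ⟨hbx.le, hx.2⟩]
      exact hG.2 x ⟨hbx.le, hx.2⟩

variable [Fintype m] [DecidableEq d]

lemma eventually_exists_frameFieldOn_Icc_joining {a : Y} {U : Set Y} (hU : IsOpen U)
    (ha : a ∈ U) {A B : Y → Matrix m d ℂ} (hA : IsFrameFieldOn J A U)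
    (hB : IsFrameFieldOn J B U) :
    ∀ᶠ c in 𝓝[>] a, ∃ F, IsFrameFieldOn J F (Icc a c) ∧ F a = A a ∧ F c = B c := by
  have hAc : ∀ x ∈ U, ContinuousAt A x := fun x hx => hA.1.continuousAt (hU.mem_nhds hx)
  have hBc : ∀ x ∈ U, ContinuousAt B x := fun x hx => hB.1.continuousAt (hU.mem_nhds hx)
  obtain ⟨γ, hγ⟩ := exists_path_eventually_injective_mulVec (hAc a ha) (hBc a ha)
    (hA.2 a ha).1 (hB.2 a ha).1
  have hV : U ∩ {x | ∀ t, Injective ((1 - γ t) • A x + γ t • B x).mulVec} ∈ 𝓝 a :=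
    inter_mem (hU.mem_nhds ha) hγ
  filter_upwards [mem_nhdsWithin_of_mem_nhds (ordConnectedComponent_mem_nhds.2 hV),
    self_mem_nhdsWithin] with c hc hac
  have hsub := Icc_subset_uIcc.trans (mem_ordConnectedComponent.1 hc)
  obtain ⟨f, hfa, hfc, hf⟩ := exists_continuous_zero_one_of_isClosed isClosed_singleton
    isClosed_singleton (disjoint_singleton.2 (ne_of_lt hac))
  set τ : Y → unitInterval := fun x => ⟨f x, hf x⟩
  have hτ : Continuous τ := f.continuous.subtype_mk _
  have hτa : τ a = 0 := Subtype.ext (hfa rfl)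
  have hτc : τ c = 1 := Subtype.ext (hfc rfl)
  refine ⟨fun x => (1 - γ (τ x)) • A x + γ (τ x) • B x, ⟨fun x hx => ?_, fun x hx => ?_⟩,
    by simp [hτa], by simp [hτc]⟩
  · have := hAc x (hsub hx).1
    have := hBc x (hsub hx).1
    exact ContinuousAt.continuousWithinAt (by fun_prop)
  · refine ⟨(hsub hx).2 (τ x), fun j => ?_⟩
    exact add_mem (Submodule.smul_mem _ _ ((hA.2 x (hsub hx).1).2 j))
      (Submodule.smul_mem _ _ ((hB.2 x (hsub hx).1).2 j))

lemma IsFrameFieldOn.eventually_exists_extension (hJ : HasLocalSections J) {a t : Y}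
    {F : Y → Matrix m d ℂ} (hF : IsFrameFieldOn J F (Icc a t)) (hat : a ≤ t) :
    ∀ᶠ c in 𝓝[>] t, a ≤ c ∧ ∃ G : Y → Matrix m d ℂ, IsFrameFieldOn J G (Icc a c) := by
  obtain ⟨A, U, hU, htU, hA, hAt⟩ :=
    hJ.exists_frameFieldOn (hF.2 t ⟨hat, le_rfl⟩).1 (hF.2 t ⟨hat, le_rfl⟩).2
  filter_upwards [eventually_exists_frameFieldOn_Icc_joining hU htU hA hA, self_mem_nhdsWithin]
    with c ⟨G, hG, hGt, _⟩ htc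
  obtain ⟨H, hH, -⟩ := hF.glue hG (hAt.symm.trans hGt.symm) htc.le
  exact ⟨hat.trans htc.le, H, hH⟩

lemma isClosed_setOf_exists_frameFieldOn_Icc [DenselyOrdered Y] (hJ : HasLocalSections J)
    (hrank : ∀ x, Fintype.card d ≤ finrank ℂ (J x)) (a : Y) :
    IsClosed {t | a ≤ t ∧ ∃ F : Y → Matrix m d ℂ, IsFrameFieldOn J F (Icc a t)} := by
  -- A field reaching some `b` just below `t` is joined, right after `b`, to a local frame `B`
  -- around `t`, which it then follows up to `t`.
  refine isClosed_of_closure_subset fun t ht => ?_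
  have hat : a ≤ t := closure_minimal (fun x hx => hx.1) isClosed_Ici ht
  obtain ⟨B₀, hB₀, hB₀J⟩ := exists_injective_mulVec_col_mem (m := m) (hrank t)
  obtain ⟨B, U, hU, htU, hB, -⟩ := hJ.exists_frameFieldOn hB₀ hB₀J
  obtain ⟨b, hbU, hab, F, hF⟩ :=
    mem_closure_iff_nhds.1 ht _ (ordConnectedComponent_mem_nhds.2 (hU.mem_nhds htU))
  rcases le_or_gt t b with htb | hbt
  · exact ⟨hat, F, hF.mono (Icc_subset_Icc_right htb)⟩
  have hbtU : Icc b t ⊆ U := Icc_subset_uIcc'.trans (mem_ordConnectedComponent.1 hbU)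
  obtain ⟨A, U', hU', hbU', hA, hAb⟩ :=
    hJ.exists_frameFieldOn (hF.2 b ⟨hab, le_rfl⟩).1 (hF.2 b ⟨hab, le_rfl⟩).2
  have : (𝓝[>] b).NeBot := nhdsGT_neBot_of_exists_gt ⟨t, hbt⟩
  obtain ⟨c, ⟨G, hG, hGb, hGc⟩, hbc, hct⟩ :=
    ((eventually_exists_frameFieldOn_Icc_joining (hU'.inter hU) ⟨hbU', hbtU ⟨le_rfl, hbt.le⟩⟩
      (hA.mono inter_subset_left) (hB.mono inter_subset_right)).and (Ioc_mem_nhdsGT hbt)).exists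
  obtain ⟨H, hH, hHc⟩ := hF.glue hG (hAb.symm.trans hGb.symm) hbc.le
  obtain ⟨H', hH', -⟩ :=
    hH.glue (hB.mono ((Icc_subset_Icc_left hbc.le).trans hbtU)) (hHc.trans hGc) hct
  exact ⟨hat, H', hH'⟩

end Interval

theorem exists_frameFieldOn_Icc [ConditionallyCompleteLinearOrder Y] [OrderTopology Y]
    [DenselyOrdered Y] [Fintype m] [DecidableEq d] (hJ : HasLocalSections J)
    (hrank : ∀ x, Fintype.card d ≤ finrank ℂ (J x)) {a b : Y}
    (hab : a ≤ b) : ∃ F : Y → Matrix m d ℂ, IsFrameFieldOn J F (Icc a b) := by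
  set S := {t | a ≤ t ∧ ∃ F : Y → Matrix m d ℂ, IsFrameFieldOn J F (Icc a t)}
  have ha : a ∈ S := by
    obtain ⟨F₀, hF₀, hF₀J⟩ := exists_injective_mulVec_col_mem (m := m) (hrank a)
    refine ⟨le_rfl, fun _ => F₀, continuousOn_const, fun x hx => ?_⟩
    rw [Icc_self, mem_singleton_iff] at hx
    exact hx ▸ ⟨hF₀, hF₀J⟩
  have hext : ∀ t ∈ S ∩ Ico a b, S ∈ 𝓝[>] t := by
    rintro t ⟨⟨hat, F, hF⟩, -⟩
    exact hF.eventually_exists_extension hJ hat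
  exact (((isClosed_setOf_exists_frameFieldOn_Icc hJ hrank a).inter isClosed_Icc
    ).Icc_subset_of_forall_mem_nhdsWithin ha hext ⟨hab, le_rfl⟩).2

end FrameFields

theorem selection_principle_interval_general (k n : ℕ)
    {ι : Type*} (W : ι → Set (Set.Icc (0 : ℝ) 1)) (hWopen : ∀ i, IsOpen (W i))
    (hWcover : ⋃ i, W i = Set.univ)
    (pW : ι → Set.Icc (0 : ℝ) 1 → Matrix (Fin n) (Fin n) ℂ)
    (hpWcont : ∀ i, ContinuousOn (pW i) (W i))
    (hpWrank : ∀ i, ∀ x ∈ W i, k + 1 ≤ (pW i x).rank) :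
    ∃ p : Set.Icc (0 : ℝ) 1 → Matrix (Fin n) (Fin n) ℂ, Continuous p ∧
      (∀ x, IsIdempotentElem (p x) ∧ IsSelfAdjoint (p x)) ∧
      (∀ x, k ≤ (p x).rank) ∧
      ∀ x, LinearMap.range (Matrix.mulVecLin (p x)) ≤
        ⨆ i ∈ {i | x ∈ W i}, LinearMap.range (Matrix.mulVecLin (pW i x)) := by
  set J : Set.Icc (0 : ℝ) 1 → Submodule ℂ (Fin n → ℂ) :=
    fun x => ⨆ i ∈ {i | x ∈ W i}, LinearMap.range (pW i x).mulVecLin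
  have hJ : HasLocalSections J :=
    HasLocalSections.iSup fun i => hasLocalSections_range_mulVecLin (hWopen i) (hpWcont i)
  have hrank : ∀ x, Fintype.card (Fin k) ≤ finrank ℂ (J x) := fun x => by
    obtain ⟨i, hi⟩ := mem_iUnion.1 (hWcover ▸ mem_univ x)
    calc Fintype.card (Fin k) ≤ (pW i x).rank := by simpa using (hpWrank i x hi).trans' k.le_succ
      _ ≤ finrank ℂ (J x) := Submodule.finrank_mono <|
          le_biSup (fun i => LinearMap.range (pW i x).mulVecLin) hi
  obtain ⟨F, hFc, hF⟩ := exists_frameFieldOn_Icc hJ hrank (zero_le_one' (Set.Icc (0 : ℝ) 1))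
  have hmem : ∀ x : Set.Icc (0 : ℝ) 1, x ∈ Icc 0 1 := fun x => ⟨x.2.1, x.2.2⟩
  have hinj : ∀ x, Injective (F x).mulVec := fun x => (hF x (hmem x)).1
  refine ⟨fun x => colProj (F x), (continuousOn_univ.1 (hFc.mono fun x _ => hmem x)).colProj hinj,
    fun x => ⟨isIdempotentElem_colProj (hinj x), isSelfAdjoint_colProj _⟩,
    fun x => by rw [rank_colProj (hinj x), Fintype.card_fin], fun x => ?_⟩
  rw [range_mulVecLin_colProj (hinj x), range_mulVecLin, Submodule.span_le]
  rintro _ ⟨j, rfl⟩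
  exact (hF x (hmem x)).2 j

theorem selection_principle_interval (k n : ℕ) (hk : 1 ≤ k)
    {ι : Type*} (W : ι → Set (Set.Icc (0 : ℝ) 1)) (hWopen : ∀ i, IsOpen (W i))
    (hWcover : ⋃ i, W i = Set.univ)
    (pW : ι → Set.Icc (0 : ℝ) 1 → Matrix (Fin n) (Fin n) ℂ)
    (hpWcont : ∀ i, ContinuousOn (pW i) (W i))
    (hpWproj : ∀ i, ∀ x ∈ W i, IsIdempotentElem (pW i x) ∧ IsSelfAdjoint (pW i x))
    (hpWrank : ∀ i, ∀ x ∈ W i, k + 1 ≤ (pW i x).rank) :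
    ∃ p : Set.Icc (0 : ℝ) 1 → Matrix (Fin n) (Fin n) ℂ, Continuous p ∧
      (∀ x, IsIdempotentElem (p x) ∧ IsSelfAdjoint (p x)) ∧
      (∀ x, k ≤ (p x).rank) ∧
      ∀ x, LinearMap.range (Matrix.mulVecLin (p x)) ≤
        ⨆ i ∈ {i | x ∈ W i}, LinearMap.range (Matrix.mulVecLin (pW i x)) :=
  selection_principle_interval_general k n W hWopen hWcover pW hpWcont hpWrank
end
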